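/- Let I = ∏_{j=1}^n [a_j, b_j] with a_j < b_j for all j, let f : I → ℝ be continuous, and let F : I → ℝ be continuous such that the mixed partial derivative ∂_1 ⋯ ∂_n F exists on the interior I̊ = ∏_{j=1}^n (a_j,b_j) and satisfies ∂_1 ⋯ ∂_n F = f on I̊. Then ∫_I f(x_1,…,x_n) dx_1⋯dx_n = ∑_{s ∈ {0,1}^n} (−1)^{#_0(s)} F(P_s), where for each binary string s ∈ {0,1}^n the vertex P_s ∈ ℝ^n has j-th coordinate b_j if s_j = 1 and a_j if s_j = 0, and #_0(s) denotes the number of zeros in s. -/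

import Mathlib

/-!
Induction on the dimension. On a compact box `[a, b]` contained in an open set `U` on which the
mixed derivative exists and equals `f`, Fubini and the one-dimensional fundamental theorem of
calculus in the first coordinate turn `∫_{[a,b]} f` into the integral over the tail box of
`g(b₀, ·) - g(a₀, ·)`, where `g = ∂_2 ⋯ ∂_n F`; this is the mixed derivative of the
`(n-1)`-dimensional function `F(b₀, ·) - F(a₀, ·)`, whose alternating vertex sum is that of `F`.
Since the mixed derivative is only known on the open box, the closed box is then exhausted by
such compact boxes, using continuity of `F` up to the boundary for the vertex sums.
-/

open MeasureTheory

/-- The partial derivative of `F` in the `i`-th coordinate direction. -/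
noncomputable def pd {n : ℕ} (i : Fin n) (F : (Fin n → ℝ) → ℝ) : (Fin n → ℝ) → ℝ :=
  fun x => deriv (fun t : ℝ => F (Function.update x i t)) (x i)

/-- The partial derivative of `F` in the `i`-th coordinate direction exists at `x`. -/
def PdAt {n : ℕ} (i : Fin n) (F : (Fin n → ℝ) → ℝ) (x : Fin n → ℝ) : Prop :=
  DifferentiableAt ℝ (fun t : ℝ => F (Function.update x i t)) (x i)

/-- Iterated partial derivative in the coordinates listed in `l` (the head of the list
being the outermost derivative). For `l = [0, 1, …, n-1]` this is `∂_1 ∂_2 ⋯ ∂_n F`. -/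
noncomputable def mixedD {n : ℕ} : List (Fin n) → ((Fin n → ℝ) → ℝ) → (Fin n → ℝ) → ℝ
  | [], F => F
  | i :: l, F => pd i (mixedD l F)

/-- All the successive partial derivatives in `mixedD l F` exist at every point of `s`. -/
def MixedDiffOn {n : ℕ} : List (Fin n) → ((Fin n → ℝ) → ℝ) → Set (Fin n → ℝ) → Prop
  | [], _, _ => True
  | i :: l, F, s => MixedDiffOn l F s ∧ ∀ x ∈ s, PdAt i (mixedD l F) x

open Filter Set Topology

section PartialDerivatives

variable {n : ℕ}

theorem MixedDiffOn.mono {l : List (Fin n)} {F : (Fin n → ℝ) → ℝ} {s t : Set (Fin n → ℝ)}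
    (h : MixedDiffOn l F s) (hts : t ⊆ s) : MixedDiffOn l F t := by
  induction l with
  | nil => trivial
  | cons i l ih => exact ⟨ih h.1, fun x hx => h.2 x (hts hx)⟩

theorem mixedD_comp_cons (l : List (Fin n)) (F : (Fin (n+1) → ℝ) → ℝ) (c : ℝ) (x : Fin n → ℝ) :
    mixedD l (fun y => F (Fin.cons c y)) x = mixedD (l.map Fin.succ) F (Fin.cons c x) := by
  induction l generalizing x with
  | nil => rfl
  | cons i l ih =>
    change deriv _ (x i) = deriv _ ((Fin.cons c x : Fin (n+1) → ℝ) i.succ)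
    simp only [ih, Fin.cons_update, Fin.cons_succ]

theorem MixedDiffOn.comp_cons {l : List (Fin n)} {F : (Fin (n+1) → ℝ) → ℝ}
    {U : Set (Fin (n+1) → ℝ)} (h : MixedDiffOn (l.map Fin.succ) F U) (c : ℝ) :
    MixedDiffOn l (fun y => F (Fin.cons c y)) {x | Fin.cons c x ∈ U} := by
  induction l with
  | nil => trivial
  | cons i l ih =>
    refine ⟨ih h.1, fun x hx => ?_⟩
    have hd := h.2 _ hx
    unfold PdAt at hd ⊢
    simpa only [mixedD_comp_cons, Fin.cons_update, Fin.cons_succ] using hd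

theorem eventuallyEq_comp_update_of_eqOn {U : Set (Fin n → ℝ)} (hU : IsOpen U) {x : Fin n → ℝ}
    (hx : x ∈ U) (i : Fin n) {G₁ G₂ : (Fin n → ℝ) → ℝ} (h : EqOn G₁ G₂ U) :
    (fun t => G₁ (Function.update x i t)) =ᶠ[𝓝 (x i)] fun t => G₂ (Function.update x i t) := by
  have hcont : Continuous fun t => Function.update x i t := continuous_const.update i continuous_id
  have hmem : ∀ᶠ t in 𝓝 (x i), Function.update x i t ∈ U :=
    hcont.continuousAt.preimage_mem_nhds (by rwa [Function.update_eq_self, hU.mem_nhds_iff])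
  exact hmem.mono fun t ht => h ht

theorem pd_congr_of_eqOn {U : Set (Fin n → ℝ)} (hU : IsOpen U) {x : Fin n → ℝ} (hx : x ∈ U)
    (i : Fin n) {G₁ G₂ : (Fin n → ℝ) → ℝ} (h : EqOn G₁ G₂ U) : pd i G₁ x = pd i G₂ x :=
  (eventuallyEq_comp_update_of_eqOn hU hx i h).deriv_eq

theorem PdAt.congr_of_eqOn {U : Set (Fin n → ℝ)} (hU : IsOpen U) {x : Fin n → ℝ} (hx : x ∈ U)
    {i : Fin n} {G₁ G₂ : (Fin n → ℝ) → ℝ} (hd : PdAt i G₁ x) (h : EqOn G₁ G₂ U) : PdAt i G₂ x :=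
  (eventuallyEq_comp_update_of_eqOn hU hx i h).differentiableAt_iff.mp hd

theorem mixedD_sub {l : List (Fin n)} {U : Set (Fin n → ℝ)} (hU : IsOpen U)
    {A B : (Fin n → ℝ) → ℝ} (hA : MixedDiffOn l A U) (hB : MixedDiffOn l B U) :
    EqOn (mixedD l fun y => A y - B y) (fun y => mixedD l A y - mixedD l B y) U := by
  induction l with
  | nil => exact fun _ _ => rfl
  | cons i l ih =>
    intro x hx
    rw [mixedD, pd_congr_of_eqOn hU hx i (ih hA.1 hB.1)]
    exact deriv_fun_sub (hA.2 x hx) (hB.2 x hx)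

theorem MixedDiffOn.sub {l : List (Fin n)} {U : Set (Fin n → ℝ)} {A B : (Fin n → ℝ) → ℝ}
    (hA : MixedDiffOn l A U) (hB : MixedDiffOn l B U) (hU : IsOpen U) :
    MixedDiffOn l (fun y => A y - B y) U := by
  induction l with
  | nil => trivial
  | cons i l ih =>
    refine ⟨ih hA.1 hB.1, fun x hx => ?_⟩
    have hd : PdAt i (fun y => mixedD l A y - mixedD l B y) x := (hA.2 x hx).sub (hB.2 x hx)
    exact hd.congr_of_eqOn hU hx (mixedD_sub hU hA.1 hB.1).symm

end PartialDerivatives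

section Boxes

variable {n : ℕ}

theorem Fin.cons_mem_Icc_iff {α : Type*} [Preorder α] {a b : Fin (n+1) → α} {t : α}
    {x : Fin n → α} : (Fin.cons t x : Fin (n+1) → α) ∈ Icc a b ↔
      t ∈ Icc (a 0) (b 0) ∧ x ∈ Icc (Fin.tail a) (Fin.tail b) := by
  simp only [mem_Icc, Pi.le_def, Fin.forall_fin_succ, Fin.cons_zero, Fin.cons_succ, Fin.tail]
  tauto

theorem setIntegral_Icc_eq_setIntegral_Icc_tail {a b : Fin (n+1) → ℝ}
    {f : (Fin (n+1) → ℝ) → ℝ} (hf : IntegrableOn f (Icc a b)) :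
    ∫ x in Icc a b, f x =
      ∫ x in Icc (Fin.tail a) (Fin.tail b), ∫ t in Icc (a 0) (b 0), f (Fin.cons t x) := by
  set e : (Fin n → ℝ) × ℝ ≃ᵐ (Fin (n+1) → ℝ) :=
    MeasurableEquiv.prodComm.trans (MeasurableEquiv.piFinSuccAbove (fun _ => ℝ) 0).symm
  have he_apply (p : (Fin n → ℝ) × ℝ) : e p = Fin.cons p.2 p.1 := by
    simp only [e, MeasurableEquiv.trans_apply, MeasurableEquiv.piFinSuccAbove_symm_apply,
      Fin.insertNthEquiv_zero]
    rfl
  have he : MeasurePreserving e (volume.prod volume) volume :=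
    (volume_preserving_piFinSuccAbove (fun _ : Fin (n+1) => ℝ) 0).symm.comp
      Measure.measurePreserving_swap
  have hpre : e ⁻¹' Icc a b = Icc (Fin.tail a) (Fin.tail b) ×ˢ Icc (a 0) (b 0) := by
    ext ⟨x, t⟩
    simp only [mem_preimage, he_apply, Fin.cons_mem_Icc_iff, mem_prod]
    tauto
  rw [← he.integrableOn_comp_preimage e.measurableEmbedding, hpre] at hf
  rw [← he.setIntegral_preimage_emb e.measurableEmbedding, hpre,
    setIntegral_prod (fun p => f (e p)) hf]
  simp only [he_apply]

theorem ContinuousOn.intervalIntegral_cons {a b : Fin (n+1) → ℝ} {f : (Fin (n+1) → ℝ) → ℝ}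
    (hf : ContinuousOn f (Icc a b)) (h0 : a 0 ≤ b 0) :
    ContinuousOn (fun x => ∫ t in a 0..b 0, f (Fin.cons t x)) (Icc (Fin.tail a) (Fin.tail b)) := by
  obtain ⟨G, hG⟩ := ContinuousMap.exists_restrict_eq isClosed_Icc ⟨_, hf.domRestrict⟩
  have hGf : EqOn G f (Icc a b) := fun x hx => DFunLike.congr_fun hG ⟨x, hx⟩
  have hG_cons : Continuous fun p : (Fin n → ℝ) × ℝ => G (Fin.cons p.2 p.1) :=
    G.continuous.comp (by fun_prop)
  have hcont : Continuous fun x => ∫ t in a 0..b 0, G (Fin.cons t x) :=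
    intervalIntegral.continuous_parametric_intervalIntegral_of_continuous' hG_cons _ _
  refine hcont.continuousOn.congr fun x hx => intervalIntegral.integral_congr fun t ht => ?_
  rw [uIcc_of_le h0] at ht
  exact (hGf (Fin.cons_mem_Icc_iff.2 ⟨ht, hx⟩)).symm

theorem intervalIntegral_cons_eq_sub_of_eqOn_pd {a b : Fin (n+1) → ℝ}
    {f g : (Fin (n+1) → ℝ) → ℝ} (h0 : a 0 ≤ b 0) (hf : ContinuousOn f (Icc a b))
    (hg : ∀ y ∈ Icc a b, PdAt 0 g y) (hpde : EqOn (pd 0 g) f (Icc a b)) {x : Fin n → ℝ}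
    (hx : x ∈ Icc (Fin.tail a) (Fin.tail b)) :
    ∫ t in a 0..b 0, f (Fin.cons t x) = g (Fin.cons (b 0) x) - g (Fin.cons (a 0) x) := by
  have hmem : MapsTo (fun t => Fin.cons t x) (uIcc (a 0) (b 0)) (Icc a b) := fun t ht =>
    Fin.cons_mem_Icc_iff.2 ⟨uIcc_of_le h0 ▸ ht, hx⟩
  have hint : IntervalIntegrable (fun t => f (Fin.cons t x)) volume (a 0) (b 0) :=
    (hf.comp (by fun_prop) hmem).intervalIntegrable
  refine intervalIntegral.integral_eq_sub_of_hasDerivAt (f := fun t => g (Fin.cons t x))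
    (fun t ht => ?_) hint
  rw [← hpde (hmem ht)]
  simpa only [pd, Fin.update_cons_zero, Fin.cons_zero] using (hg _ (hmem ht)).hasDerivAt

end Boxes

section VertexSums

variable {n : ℕ}

noncomputable def alternatingVertexSum (a b : Fin n → ℝ) (F : (Fin n → ℝ) → ℝ) : ℝ :=
  ∑ s : Fin n → Bool,
    (-1 : ℝ) ^ (Finset.univ.filter fun j => s j = false).card *
      F (fun j => if s j then b j else a j)

theorem alternatingVertexSum_fin_zero (a b : Fin 0 → ℝ) (F : (Fin 0 → ℝ) → ℝ) :
    alternatingVertexSum a b F = F a := by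
  simp [alternatingVertexSum, Subsingleton.elim _ a]

theorem alternatingVertexSum_succ (a b : Fin (n+1) → ℝ) (F : (Fin (n+1) → ℝ) → ℝ) :
    alternatingVertexSum a b F = alternatingVertexSum (Fin.tail a) (Fin.tail b)
      (fun x => F (Fin.cons (b 0) x) - F (Fin.cons (a 0) x)) := by
  have hvertex (c : Bool) (s : Fin n → Bool) :
      (fun j => if (Fin.cons c s : Fin (n+1) → Bool) j then b j else a j) =
        Fin.cons (if c then b 0 else a 0)
          (fun j => if s j then Fin.tail b j else Fin.tail a j) := by
    ext j
    refine Fin.cases ?_ (fun i => ?_) j <;> simp [Fin.tail]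
  have hcard (c : Bool) (s : Fin n → Bool) :
      (Finset.univ.filter fun j => (Fin.cons c s : Fin (n+1) → Bool) j = false).card =
        (if c then 0 else 1) + (Finset.univ.filter fun j => s j = false).card := by
    rw [Finset.card_filter, Finset.card_filter, Fin.sum_univ_succ]
    cases c <;> simp
  rw [alternatingVertexSum, ← (Fin.consEquiv fun _ => Bool).sum_comp, Fintype.sum_prod_type]
  simp only [Fintype.sum_bool, ← Finset.sum_add_distrib]
  refine Finset.sum_congr rfl fun s _ => ?_
  simp only [Fin.consEquiv_apply, hvertex, hcard]
  simp only [if_true, if_false, Bool.false_eq_true, zero_add, pow_add, pow_one]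
  ring

theorem ite_mem_Icc {a b a' b' : Fin n → ℝ} (ha' : a' ∈ Icc a b) (hb' : b' ∈ Icc a b)
    (s : Fin n → Bool) : (fun j => if s j then b' j else a' j) ∈ Icc a b :=
  ⟨fun j => by dsimp only; split_ifs; exacts [hb'.1 j, ha'.1 j],
    fun j => by dsimp only; split_ifs; exacts [hb'.2 j, ha'.2 j]⟩

theorem tendsto_alternatingVertexSum {α : Type*} {l : Filter α} {a b : Fin n → ℝ}
    {a' b' : α → Fin n → ℝ} {F : (Fin n → ℝ) → ℝ} (hab : a ≤ b) (hF : ContinuousOn F (Icc a b))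
    (ha : Tendsto a' l (𝓝 a)) (hb : Tendsto b' l (𝓝 b))
    (hmem : ∀ᶠ k in l, a' k ∈ Icc a b ∧ b' k ∈ Icc a b) :
    Tendsto (fun k => alternatingVertexSum (a' k) (b' k) F) l (𝓝 (alternatingVertexSum a b F)) := by
  refine tendsto_finsetSum _ fun s _ => Tendsto.const_mul _ ?_
  have hvertex : Tendsto (fun k j => if s j then b' k j else a' k j) l
      (𝓝 fun j => if s j then b j else a j) :=
    tendsto_pi_nhds.2 fun j => by
      split_ifs
      exacts [tendsto_pi_nhds.1 hb j, tendsto_pi_nhds.1 ha j]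
  refine (hF _ (ite_mem_Icc ⟨le_rfl, hab⟩ ⟨hab, le_rfl⟩ s)).tendsto.comp ?_
  exact tendsto_nhdsWithin_iff.2 ⟨hvertex, hmem.mono fun k hk => ite_mem_Icc hk.1 hk.2 s⟩

end VertexSums

theorem setIntegral_Icc_fin_zero (a b : Fin 0 → ℝ) (f : (Fin 0 → ℝ) → ℝ) :
    ∫ x in Icc a b, f x = f a := by
  rw [Subsingleton.eq_univ_of_nonempty (nonempty_Icc.2 fun j => j.elim0), Measure.restrict_univ,
    volume_pi, Measure.pi_of_empty (x := a), integral_dirac]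

theorem setIntegral_Icc_eq_alternatingVertexSum_of_subset {n : ℕ} {a b : Fin n → ℝ}
    (hab : a ≤ b) {f F : (Fin n → ℝ) → ℝ} {U : Set (Fin n → ℝ)} (hU : IsOpen U)
    (hsub : Icc a b ⊆ U) (hf : ContinuousOn f (Icc a b))
    (hdiff : MixedDiffOn (List.finRange n) F U) (hpde : EqOn (mixedD (List.finRange n) F) f U) :
    ∫ x in Icc a b, f x = alternatingVertexSum a b F := by
  induction n with
  | zero =>
    rw [setIntegral_Icc_fin_zero, alternatingVertexSum_fin_zero, ← hpde (hsub (left_mem_Icc.2 hab))]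
    rfl
  | succ n ih =>
    rw [List.finRange_succ] at hdiff hpde
    obtain ⟨hdiff_tail, hdiff_zero⟩ := hdiff
    set g := mixedD ((List.finRange n).map Fin.succ) F
    have h0 : a 0 ≤ b 0 := hab 0
    have hftc : ∀ x ∈ Icc (Fin.tail a) (Fin.tail b),
        ∫ t in a 0..b 0, f (Fin.cons t x) = g (Fin.cons (b 0) x) - g (Fin.cons (a 0) x) :=
      fun x hx => intervalIntegral_cons_eq_sub_of_eqOn_pd h0 hf (fun y hy => hdiff_zero y (hsub hy))
        (hpde.mono hsub) hx
    set U' := {x | Fin.cons (b 0) x ∈ U} ∩ {x | Fin.cons (a 0) x ∈ U}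
    have hU' : IsOpen U' := (hU.preimage (by fun_prop)).inter (hU.preimage (by fun_prop))
    have hsub' : Icc (Fin.tail a) (Fin.tail b) ⊆ U' := fun x hx =>
      ⟨hsub (Fin.cons_mem_Icc_iff.2 ⟨right_mem_Icc.2 h0, hx⟩),
        hsub (Fin.cons_mem_Icc_iff.2 ⟨left_mem_Icc.2 h0, hx⟩)⟩
    have hdiff_b : MixedDiffOn (List.finRange n) (fun x => F (Fin.cons (b 0) x)) U' :=
      (hdiff_tail.comp_cons (b 0)).mono inter_subset_left
    have hdiff_a : MixedDiffOn (List.finRange n) (fun x => F (Fin.cons (a 0) x)) U' :=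
      (hdiff_tail.comp_cons (a 0)).mono inter_subset_right
    -- `g (b₀, ·) - g (a₀, ·)` rather than the slice integral of `f`: the former is the mixed
    -- derivative on all of `U'`, and the two agree on the tail box by `hftc`.
    have hpde' :
        EqOn (mixedD (List.finRange n) fun x => F (Fin.cons (b 0) x) - F (Fin.cons (a 0) x))
          (fun x => g (Fin.cons (b 0) x) - g (Fin.cons (a 0) x)) U' := fun x hx => by
      rw [mixedD_sub hU' hdiff_b hdiff_a hx]
      simp only [mixedD_comp_cons, g]
    calc ∫ x in Icc a b, f x
        = ∫ x in Icc (Fin.tail a) (Fin.tail b), ∫ t in a 0..b 0, f (Fin.cons t x) := by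
          rw [setIntegral_Icc_eq_setIntegral_Icc_tail (hf.integrableOn_compact isCompact_Icc)]
          simp only [integral_Icc_eq_integral_Ioc, intervalIntegral.integral_of_le h0]
      _ = ∫ x in Icc (Fin.tail a) (Fin.tail b), (g (Fin.cons (b 0) x) - g (Fin.cons (a 0) x)) :=
          setIntegral_congr_fun measurableSet_Icc hftc
      _ = alternatingVertexSum a b F := by
          rw [alternatingVertexSum_succ]
          refine ih (fun j => hab j.succ) hU' hsub' ?_ (hdiff_b.sub hdiff_a hU') hpde'
          exact (hf.intervalIntegral_cons h0).congr fun x hx => (hftc x hx).symm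

theorem exists_seq_Icc_subset_pi_Ioo {ι : Type*} {a b : ι → ℝ} (hab : ∀ j, a j < b j) :
    ∃ a' b' : ℕ → ι → ℝ, Antitone a' ∧ Monotone b' ∧ Tendsto a' atTop (𝓝 a) ∧
      Tendsto b' atTop (𝓝 b) ∧
        ∀ k, a' k ≤ b' k ∧ Icc (a' k) (b' k) ⊆ pi univ fun j => Ioo (a j) (b j) := by
  set u : ℕ → ℝ := fun k => ((k : ℝ) + 2)⁻¹
  have hu_pos (k : ℕ) : 0 < u k := by positivity
  have hu_le (k : ℕ) : 2 * u k ≤ 1 := by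
    rw [← div_eq_mul_inv, div_le_one (by positivity)]
    linarith [k.cast_nonneg (α := ℝ)]
  have hu_anti : Antitone u := fun k m hkm => by
    simp only [u]; gcongr
  have hu_lim : Tendsto u atTop (𝓝 0) :=
    tendsto_inv_atTop_zero.comp (tendsto_natCast_atTop_atTop.atTop_add tendsto_const_nhds)
  have hd (j : ι) : 0 < b j - a j := sub_pos.2 (hab j)
  have hδ (k : ℕ) (j : ι) : 0 < u k * (b j - a j) := mul_pos (hu_pos k) (hd j)
  refine ⟨fun k => a + u k • (b - a), fun k => b - u k • (b - a), fun k m hkm j => ?_,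
    fun k m hkm j => ?_, ?_, ?_, fun k => ⟨fun j => ?_, fun x hx j _ => ⟨?_, ?_⟩⟩⟩
  · simp only [Pi.add_apply, Pi.smul_apply, Pi.sub_apply, smul_eq_mul]
    gcongr; exacts [(hd j).le, hu_anti hkm]
  · simp only [Pi.sub_apply, Pi.smul_apply, smul_eq_mul]
    gcongr; exacts [(hd j).le, hu_anti hkm]
  · simpa using tendsto_const_nhds.add (hu_lim.smul_const (b - a))
  · simpa using tendsto_const_nhds.sub (hu_lim.smul_const (b - a))
  · simp only [Pi.add_apply, Pi.sub_apply, Pi.smul_apply, smul_eq_mul]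
    nlinarith [hu_le k, hd j]
  · have := hx.1 j
    simp only [Pi.add_apply, Pi.smul_apply, Pi.sub_apply, smul_eq_mul] at this
    linarith [hδ k j]
  · have := hx.2 j
    simp only [Pi.smul_apply, Pi.sub_apply, smul_eq_mul] at this
    linarith [hδ k j]

theorem tendsto_setIntegral_Icc_of_tendsto {ι : Type*} [Fintype ι] {a b : ι → ℝ}
    {a' b' : ℕ → ι → ℝ} {f : (ι → ℝ) → ℝ} (ha' : Antitone a') (hb' : Monotone b')
    (ha : Tendsto a' atTop (𝓝 a)) (hb : Tendsto b' atTop (𝓝 b)) (hf : IntegrableOn f (Icc a b)) :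
    Tendsto (fun k => ∫ x in Icc (a' k) (b' k), f x) atTop (𝓝 (∫ x in Icc a b, f x)) := by
  have hsub : ⋃ k, Icc (a' k) (b' k) ⊆ Icc a b :=
    iUnion_subset fun k => Icc_subset_Icc (ha'.le_of_tendsto ha k) (hb'.ge_of_tendsto hb k)
  have hsup : (pi univ fun j => Ioo (a j) (b j)) ⊆ ⋃ k, Icc (a' k) (b' k) := fun x hx => by
    have hev : ∀ᶠ k in atTop, ∀ j, a' k j < x j ∧ x j < b' k j :=
      eventually_all.2 fun j => ((tendsto_pi_nhds.1 ha j).eventually_lt_const (hx j trivial).1).and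
        ((tendsto_pi_nhds.1 hb j).eventually_const_lt (hx j trivial).2)
    obtain ⟨k, hk⟩ := hev.exists
    exact mem_iUnion.2 ⟨k, fun j => (hk j).1.le, fun j => (hk j).2.le⟩
  have hae : (⋃ k, Icc (a' k) (b' k) : Set (ι → ℝ)) =ᵐ[volume] Icc a b :=
    hsub.eventuallyLE.antisymm (Measure.univ_pi_Ioo_ae_eq_Icc.symm.le.trans hsup.eventuallyLE)
  rw [← setIntegral_congr_set hae]
  exact tendsto_setIntegral_of_monotone (fun k => measurableSet_Icc)
    (fun k m hkm => Icc_subset_Icc (ha' hkm) (hb' hkm)) (hf.mono_set hsub)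

/-- (Fundamental Theorem of Calculus in `n` dimensions.)
Let `I = ∏_{j=1}^n [a_j, b_j]` with `a_j < b_j`, let `f : I → ℝ` be continuous, and let
`F : I → ℝ` be continuous such that the mixed partial derivative `∂_1 ⋯ ∂_n F` exists on
the interior `I̊` and satisfies `∂_1 ⋯ ∂_n F = f` on `I̊`. Then
`∫_I f = ∑_{s ∈ {0,1}^n} (−1)^{#_0(s)} F(P_s)`, where the vertex `P_s` has `j`-th
coordinate `b_j` if `s_j = 1` and `a_j` if `s_j = 0`, and `#_0(s)` is the number of
zeros in `s`. -/
theorem integral_eq_alternating_vertex_sum (n : ℕ) (a b : Fin n → ℝ) (hab : ∀ j, a j < b j)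
    (f F : (Fin n → ℝ) → ℝ)
    (hf : ContinuousOn f (Set.Icc a b))
    (hF : ContinuousOn F (Set.Icc a b))
    (hdiff : MixedDiffOn (List.finRange n) F (Set.pi Set.univ fun j => Set.Ioo (a j) (b j)))
    (hpde : ∀ x ∈ Set.pi Set.univ fun j => Set.Ioo (a j) (b j),
      mixedD (List.finRange n) F x = f x) :
    ∫ x in Set.Icc a b, f x =
      ∑ s : Fin n → Bool,
        (-1 : ℝ) ^ (Finset.univ.filter fun j => s j = false).card *
          F (fun j => if s j then b j else a j) := by
  obtain ⟨a', b', ha', hb', ha, hb, hbox⟩ := exists_seq_Icc_subset_pi_Ioo hab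
  have hIcc (k : ℕ) : Icc (a' k) (b' k) ⊆ Icc a b :=
    Icc_subset_Icc (ha'.le_of_tendsto ha k) (hb'.ge_of_tendsto hb k)
  have hbox_eq (k : ℕ) : ∫ x in Icc (a' k) (b' k), f x = alternatingVertexSum (a' k) (b' k) F :=
    setIntegral_Icc_eq_alternatingVertexSum_of_subset (hbox k).1
      (isOpen_set_pi finite_univ fun _ _ => isOpen_Ioo) (hbox k).2 (hf.mono (hIcc k)) hdiff hpde
  have hlim_integral := tendsto_setIntegral_Icc_of_tendsto ha' hb' ha hb
    (hf.integrableOn_compact isCompact_Icc)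
  refine tendsto_nhds_unique (hlim_integral.congr hbox_eq)
    (tendsto_alternatingVertexSum (fun j => (hab j).le) hF ha hb (Eventually.of_forall fun k => ?_))
  exact ⟨hIcc k (left_mem_Icc.2 (hbox k).1), hIcc k (right_mem_Icc.2 (hbox k).1)⟩
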